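/- arXiv:1903.00370 — 2 statements merged into one kernel-verified Lean document; each statement's English description precedes it below -/
import Mathlib

section
/- Let F be the Riesz space of bounded real functions on ℝ with countable support and E = ℝ·1 ⊕ F ⊆ ℝ^ℝ. Then the identity operator on (E,|·|,E) is sequentially p-compact: every order bounded sequence (x_n) in E has a subsequence that order converges in E. -/
open Filter MeasureTheory Set

/-- A nonempty, upward-directed index preorder (the index set of a net). -/
def IsDirectedIx (A : Type) [Preorder A] : Prop :=
  Nonempty A ∧ ∀ a b : A, ∃ c : A, a ≤ c ∧ b ≤ c

/-- `φ : B → A` is a (Kelley) subnet selection map: monotone and cofinal. -/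
def IsSubnet {A B : Type} [Preorder A] [Preorder B] (φ : B → A) : Prop :=
  Monotone φ ∧ ∀ a : A, ∃ b : B, a ≤ φ b

/-- `p : E → V` is a vector ("lattice") norm with values in the vector lattice `V`. -/
def IsVectorNorm {E V : Type} [AddCommGroup E] [Module ℝ E]
    [AddCommGroup V] [Lattice V] [Module ℝ V] (p : E → V) : Prop :=
  (∀ x, 0 ≤ p x) ∧ (∀ x, p x = 0 ↔ x = 0) ∧
  (∀ x y, p (x + y) ≤ p x + p y) ∧ (∀ (c : ℝ) (x : E), p (c • x) = |c| • p x)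

/-- `q`-convergence of the net `y` to `z` in a lattice-normed space `(E, q, V)`:
there is a decreasing net `e` in `V` with infimum `0` dominating `q (y α - z)` eventually. -/
def QConvNet {A E V : Type} [Preorder A] [AddCommGroup E]
    [AddCommGroup V] [Lattice V] (q : E → V) (y : A → E) (z : E) : Prop :=
  ∃ (Γ : Type) (_ : Preorder Γ), IsDirectedIx Γ ∧
    ∃ e : Γ → V, Antitone e ∧ IsGLB (Set.range e) 0 ∧
      ∀ γ : Γ, ∃ α₀ : A, ∀ α ≥ α₀, q (y α - z) ≤ e γ

/-- Relatively uniform `q`-convergence of the net `y` to `z`. -/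
def RUConvNet {A E V : Type} [Preorder A] [AddCommGroup E]
    [AddCommGroup V] [Lattice V] [Module ℝ V] (q : E → V) (y : A → E) (z : E) : Prop :=
  ∃ e : V, 0 ≤ e ∧ ∀ ε : ℝ, 0 < ε → ∃ α₀ : A, ∀ α ≥ α₀, q (y α - z) ≤ ε • e

/-- Order convergence of a net in a vector lattice. -/
def OConvNet {A G : Type} [Preorder A] [Lattice G] [AddCommGroup G]
    (f : A → G) (l : G) : Prop :=
  ∃ (Γ : Type) (_ : Preorder Γ), IsDirectedIx Γ ∧
    ∃ g : Γ → G, Antitone g ∧ IsGLB (Set.range g) 0 ∧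
      ∀ γ : Γ, ∃ α₀ : A, ∀ α ≥ α₀, |f α - l| ≤ g γ

/-- Unbounded order convergence of a net in a vector lattice. -/
def UOConvNet {A G : Type} [Preorder A] [Lattice G] [AddCommGroup G]
    (f : A → G) (l : G) : Prop :=
  ∀ h : G, 0 ≤ h → OConvNet (fun α => |f α - l| ⊓ h) 0

/-- Order convergence of a net computed inside the sublattice `S` of `G`:
the limit and the dominating decreasing net lie in `S`, and the dominating net
has infimum `0` relative to `S`. -/
def OConvNetIn {A G : Type} [Preorder A] [Lattice G] [AddCommGroup G]
    (S : Set G) (f : A → G) (l : G) : Prop :=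
  l ∈ S ∧ ∃ (Γ : Type) (_ : Preorder Γ), IsDirectedIx Γ ∧
    ∃ g : Γ → G, (∀ γ, g γ ∈ S) ∧ Antitone g ∧ (∀ γ, 0 ≤ g γ) ∧
      (∀ w ∈ S, (∀ γ, w ≤ g γ) → w ≤ 0) ∧
      ∀ γ : Γ, ∃ α₀ : A, ∀ α ≥ α₀, |f α - l| ≤ g γ

/-- Order convergence of a sequence inside the sublattice `S`. -/
def OConvSeqIn {G : Type} [Lattice G] [AddCommGroup G]
    (S : Set G) (f : ℕ → G) (l : G) : Prop :=
  OConvNetIn S f l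

/-- The Riesz space of bounded real functions on `ℝ` with countable support. -/
def Fspace : Set (ℝ → ℝ) :=
  {f | (∃ C : ℝ, ∀ x, |f x| ≤ C) ∧ Set.Countable {x | f x ≠ 0}}

/-- `E = ℝ·1 ⊕ F`: functions that are a constant plus a bounded function with
countable support. -/
def Espace : Set (ℝ → ℝ) :=
  {g | ∃ (c : ℝ) (f : ℝ → ℝ), f ∈ Fspace ∧ g = fun x => c + f x}

/-!
Off a common countable set `T`, every `x n` is constant, so a pointwise convergent subsequence
only has to be extracted on `T` plus one point outside it, which compactness of a countable
product of intervals provides. The limit is again bounded and constant off `T`, hence lies in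
`E`, and so do the tail suprema `t ↦ ⨆ k ≥ m, |x (φ k) t - l t|`; these decrease to `0`
pointwise, which gives order convergence inside `E` (an element of `E` below all of them is
`≤ 0` pointwise).
-/

open Topology

variable {α β : Type*}

def ConstantOn (g : α → β) (s : Set α) : Prop :=
  ∀ ⦃t⦄, t ∈ s → ∀ ⦃u⦄, u ∈ s → g t = g u

theorem ConstantOn.mono {g : α → β} {s s' : Set α} (h : ConstantOn g s) (hs : s' ⊆ s) :
    ConstantOn g s' :=
  fun _ ht _ hu => h (hs ht) (hs hu)

theorem constantOn_of_tendsto {y : ℕ → α → ℝ} {l : α → ℝ} {s : Set α}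
    (hy : ∀ t, Tendsto (fun k => y k t) atTop (𝓝 (l t))) (hys : ∀ k, ConstantOn (y k) s) :
    ConstantOn l s := fun t ht u hu =>
  tendsto_nhds_unique (hy t) (by simpa only [hys _ ht hu] using hy u)

theorem isDirectedIx_of_isDirected (A : Type) [Preorder A] [Nonempty A]
    [IsDirected A (· ≤ ·)] : IsDirectedIx A :=
  ⟨inferInstance, directed_of (· ≤ ·)⟩

section TailSup

variable {y : ℕ → α → ℝ} {l : α → ℝ}

/-- `⨆ k ≥ m, |y k t - l t|`, written with `k + m` so that the supremum runs over all of `ℕ`. -/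
noncomputable def tailSupAbsSub (y : ℕ → α → ℝ) (l : α → ℝ) (m : ℕ) (t : α) : ℝ :=
  ⨆ k, |y (k + m) t - l t|

theorem le_tailSupAbsSub {t : α} (hbdd : BddAbove (range fun k => |y k t - l t|))
    {m k : ℕ} (hmk : m ≤ k) : |y k t - l t| ≤ tailSupAbsSub y l m t := by
  have hshift : BddAbove (range fun j => |y (j + m) t - l t|) :=
    hbdd.mono (range_subset_iff.2 fun j => mem_range_self (j + m))
  simpa only [tailSupAbsSub, Nat.sub_add_cancel hmk] using le_ciSup hshift (k - m)

theorem tailSupAbsSub_le {t : α} {B : ℝ} (hB : ∀ k, |y k t - l t| ≤ B) (m : ℕ) :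
    tailSupAbsSub y l m t ≤ B :=
  ciSup_le fun k => hB (k + m)

theorem tailSupAbsSub_nonneg {t : α} (hbdd : BddAbove (range fun k => |y k t - l t|))
    (m : ℕ) : 0 ≤ tailSupAbsSub y l m t :=
  (abs_nonneg _).trans (le_tailSupAbsSub hbdd le_rfl)

theorem tailSupAbsSub_antitone (hbdd : ∀ t, BddAbove (range fun k => |y k t - l t|)) :
    Antitone (tailSupAbsSub y l) := fun _ _ hmm' t =>
  ciSup_le fun k => le_tailSupAbsSub (hbdd t) (hmm'.trans (Nat.le_add_left _ k))

theorem ConstantOn.tailSupAbsSub {s : Set α} (hy : ∀ k, ConstantOn (y k) s)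
    (hl : ConstantOn l s) (m : ℕ) : ConstantOn (tailSupAbsSub y l m) s := fun t ht u hu => by
  simp only [_root_.tailSupAbsSub, hy _ ht hu, hl ht hu]

variable (hy : ∀ t, Tendsto (fun k => y k t) atTop (𝓝 (l t)))
include hy

theorem bddAbove_range_abs_sub_of_tendsto (t : α) :
    BddAbove (range fun k => |y k t - l t|) :=
  (((hy t).sub_const (l t)).abs).bddAbove_range

theorem tendsto_tailSupAbsSub_zero (t : α) :
    Tendsto (fun m => tailSupAbsSub y l m t) atTop (𝓝 0) := by
  refine Metric.tendsto_atTop.2 fun ε hε => ?_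
  obtain ⟨m, hm⟩ := Metric.tendsto_atTop.1 (hy t) (ε / 2) (half_pos hε)
  refine ⟨m, fun n hn => ?_⟩
  have hle : tailSupAbsSub y l n t ≤ ε / 2 :=
    ciSup_le fun k => (hm (k + n) (by omega)).le
  rw [Real.dist_eq, sub_zero,
    abs_of_nonneg (tailSupAbsSub_nonneg (bddAbove_range_abs_sub_of_tendsto hy t) n)]
  linarith

end TailSup

theorem oConvSeqIn_of_tendsto {α : Type} {y : ℕ → α → ℝ} {l : α → ℝ} {S : Set (α → ℝ)}
    (hy : ∀ t, Tendsto (fun k => y k t) atTop (𝓝 (l t))) (hl : l ∈ S)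
    (hS : ∀ m, tailSupAbsSub y l m ∈ S) : OConvSeqIn S y l := by
  have hbdd := bddAbove_range_abs_sub_of_tendsto hy
  refine ⟨hl, ℕ, inferInstance, isDirectedIx_of_isDirected ℕ, tailSupAbsSub y l, hS,
    tailSupAbsSub_antitone hbdd, fun m t => tailSupAbsSub_nonneg (hbdd t) m, ?_, ?_⟩
  · exact fun w _ hw t =>
      ge_of_tendsto' (tendsto_tailSupAbsSub_zero hy t) fun m => hw m t
  · exact fun m => ⟨m, fun k hk t => le_tailSupAbsSub (hbdd t) hk⟩

theorem exists_subseq_tendsto_on_countable {S : Set α} (hS : S.Countable) {x : ℕ → α → ℝ}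
    {b : α → ℝ} (hb : ∀ n t, |x n t| ≤ b t) :
    ∃ φ : ℕ → ℕ, StrictMono φ ∧
      ∀ t ∈ S, ∃ L, Tendsto (fun k => x (φ k) t) atTop (𝓝 L) := by
  have := hS.to_subtype
  have hK : IsCompact (univ.pi fun t : S => Icc (-b t) (b t)) :=
    isCompact_univ_pi fun _ => isCompact_Icc
  obtain ⟨g, -, φ, hφ, hg⟩ :=
    hK.tendsto_subseq (x := fun n (t : S) => x n t) fun n t _ => abs_le.1 (hb n t)
  exact ⟨φ, hφ, fun t ht => ⟨g ⟨t, ht⟩, tendsto_pi_nhds.1 hg ⟨t, ht⟩⟩⟩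

theorem exists_subseq_tendsto_of_constantOn_compl {T : Set α} (hT : T.Countable)
    {x : ℕ → α → ℝ} (hx : ∀ n, ConstantOn (x n) Tᶜ) {b : α → ℝ} (hb : ∀ n t, |x n t| ≤ b t) :
    ∃ φ : ℕ → ℕ, StrictMono φ ∧
      ∃ l : α → ℝ, ∀ t, Tendsto (fun k => x (φ k) t) atTop (𝓝 (l t)) := by
  obtain ⟨S, hSc, hTS, hS⟩ : ∃ S : Set α, S.Countable ∧ T ⊆ S ∧ ∀ t ∉ T, ∃ s ∈ S, s ∉ T := by
    rcases Tᶜ.eq_empty_or_nonempty with hempty | ⟨t₀, ht₀⟩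
    · exact ⟨T, hT, subset_rfl, fun t ht => (eq_empty_iff_forall_notMem.1 hempty t ht).elim⟩
    · exact ⟨insert t₀ T, hT.insert t₀, subset_insert _ _, fun _ _ => ⟨t₀, mem_insert _ _, ht₀⟩⟩
  obtain ⟨φ, hφ, hconv⟩ := exists_subseq_tendsto_on_countable hSc hb
  have hconv' : ∀ t, ∃ L, Tendsto (fun k => x (φ k) t) atTop (𝓝 L) := by
    intro t
    by_cases htT : t ∈ T
    · exact hconv t (hTS htT)
    · obtain ⟨s, hsS, hsT⟩ := hS t htT
      simpa only [hx _ htT hsT] using hconv s hsS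
  choose l hl using hconv'
  exact ⟨φ, hφ, l, hl⟩

theorem mem_Espace_iff {g : ℝ → ℝ} :
    g ∈ Espace ↔ (∃ C, ∀ t, |g t| ≤ C) ∧ ∃ T : Set ℝ, T.Countable ∧ ConstantOn g Tᶜ := by
  constructor
  · rintro ⟨c, f, ⟨⟨C, hC⟩, hf⟩, rfl⟩
    refine ⟨⟨|c| + C, fun t => (abs_add_le _ _).trans (by linarith [hC t])⟩, _, hf, ?_⟩
    intro t ht u hu
    simp only [mem_compl_iff, mem_ofPred_eq, not_not] at ht hu
    simp only [ht, hu]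
  · rintro ⟨⟨C, hC⟩, T, hT, hg⟩
    obtain ⟨t₀, ht₀⟩ : ∃ t₀, t₀ ∉ T := by
      by_contra! h
      exact not_countable_univ (hT.mono fun t _ => h t)
    refine ⟨g t₀, fun t => g t - g t₀, ⟨⟨C + |g t₀|, fun t => ?_⟩, hT.mono fun t ht => ?_⟩, ?_⟩
    · exact (abs_sub _ _).trans (by linarith [hC t])
    · by_contra htT
      exact ht (sub_eq_zero.2 (hg htT ht₀))
    · funext t
      ring

/-- **Example.** The identity on `(E,|·|,E)`, with `E = ℝ·1 ⊕ F`, is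
sequentially `p`-compact: every order bounded sequence in `E` has a subsequence
that order converges in `E`. -/
theorem identity_sequentially_pCompact_on_Espace
    (x : ℕ → (ℝ → ℝ)) (hx : ∀ n, x n ∈ Espace)
    (hbdd : ∃ b ∈ Espace, ∀ n, |x n| ≤ b) :
    ∃ φ : ℕ → ℕ, StrictMono φ ∧
      ∃ l : ℝ → ℝ, OConvSeqIn Espace (fun k => x (φ k)) l := by
  obtain ⟨C, hC⟩ : ∃ C, ∀ n t, |x n t| ≤ C := by
    obtain ⟨b, hbE, hb⟩ := hbdd
    obtain ⟨⟨C, hCb⟩, -⟩ := mem_Espace_iff.1 hbE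
    exact ⟨C, fun n t => (hb n t).trans ((le_abs_self _).trans (hCb t))⟩
  choose T hTc hxT using fun n => (mem_Espace_iff.1 (hx n)).2
  have hUc : (⋃ n, T n).Countable := countable_iUnion hTc
  have hxU : ∀ n, ConstantOn (x n) (⋃ n, T n)ᶜ := fun n =>
    (hxT n).mono (compl_subset_compl.2 (subset_iUnion T n))
  obtain ⟨φ, hφ, l, hl⟩ := exists_subseq_tendsto_of_constantOn_compl hUc hxU hC
  have hlU : ConstantOn l (⋃ n, T n)ᶜ := constantOn_of_tendsto hl fun k => hxU (φ k)
  have hlC : ∀ t, |l t| ≤ C := fun t =>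
    le_of_tendsto' (hl t).abs fun k => hC (φ k) t
  have hlE : l ∈ Espace := mem_Espace_iff.2 ⟨⟨C, hlC⟩, _, hUc, hlU⟩
  have htailE : ∀ m, tailSupAbsSub (fun k => x (φ k)) l m ∈ Espace := by
    intro m
    have hdev : ∀ k t, |x (φ k) t - l t| ≤ 2 * C := fun k t =>
      (abs_sub _ _).trans (by linarith [hC (φ k) t, hlC t])
    refine mem_Espace_iff.2 ⟨⟨2 * C, fun t => ?_⟩, _, hUc, hlU.tailSupAbsSub (fun k => hxU (φ k)) m⟩
    rw [abs_of_nonneg (tailSupAbsSub_nonneg (bddAbove_range_abs_sub_of_tendsto hl t) m)]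
    exact tailSupAbsSub_le (hdev · t) m
  exact ⟨φ, hφ, l, oConvSeqIn_of_tendsto hl hlE htailE⟩
end

section
/- Let F be the Riesz space of bounded real functions on ℝ with countable support and E = ℝ·1 ⊕ F ⊆ ℝ^ℝ. Let 𝓕 be the collection of finite subsets of ℝ₊ directed by inclusion and g_A = 1_A for A ∈ 𝓕. Then the net (g_A) is order bounded in E but no subnet of (g_A) order converges in E; in particular the identity on (E,|·|,E) is not rp-compact. -/
/-! Every `l ∈ E` takes its constant value `c` at some `x₀ ≥ 0` and some `x₁ < 0`, because a
countable set has dense complement. Along any subnet, `1_A` is frequently `1` at `x₀` and always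
`0` at `x₁`, so whatever dominates `|1_A - l|` eventually is at least
`max |1 - c| |c| ≥ 1/2` at one of these two points, chosen independently of the dominating
function. A net with infimum `0` relative to `E` cannot stay above `1/2` at a point, since the
point mass `(1/2) • 1_{x}` lies in `E`; nor can `ε • e` for small `ε`. -/

open Filter MeasureTheory Set

open Classical in
/-- The indicator function of a finite set `s` of nonnegative reals. -/
noncomputable def finIndicator (s : Finset {x : ℝ // 0 ≤ x}) : ℝ → ℝ :=
  fun t => if ∃ h : 0 ≤ t, (⟨t, h⟩ : {x : ℝ // 0 ≤ x}) ∈ s then 1 else 0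

lemma indicator_const_mem_Fspace {s : Set ℝ} (hs : s.Countable) (a : ℝ) :
    s.indicator (fun _ => a) ∈ Fspace := by
  refine ⟨⟨|a|, fun x => ?_⟩, hs.mono fun x hx => ?_⟩
  · by_cases hx : x ∈ s <;> simp [hx]
  · by_contra hxs
    exact hx (Set.indicator_of_notMem hxs _)

lemma Fspace_subset_Espace : Fspace ⊆ Espace :=
  fun f hf => ⟨0, f, hf, by simp⟩

lemma Espace_exists_eq_on_both_half_lines {l : ℝ → ℝ} (hl : l ∈ Espace) :
    ∃ c, (∃ x, 0 ≤ x ∧ l x = c) ∧ ∃ x, x < 0 ∧ l x = c := by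
  obtain ⟨c, f, ⟨-, hf⟩, rfl⟩ := hl
  have hzero : Dense {x | f x ≠ 0}ᶜ := hf.dense_compl ℝ
  obtain ⟨x₀, hfx₀, hx₀⟩ := hzero.exists_mem_open isOpen_Ioi Set.nonempty_Ioi
  obtain ⟨x₁, hfx₁, hx₁⟩ := hzero.exists_mem_open isOpen_Iio Set.nonempty_Iio
  simp only [Set.mem_compl_iff, Set.mem_ofPred_eq, not_not] at hfx₀ hfx₁
  exact ⟨c, ⟨x₀, le_of_lt hx₀, by simp [hfx₀]⟩, x₁, hx₁, by simp [hfx₁]⟩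

lemma finIndicator_eq_indicator (s : Finset {x : ℝ // 0 ≤ x}) :
    finIndicator s = {t | ∃ h : 0 ≤ t, (⟨t, h⟩ : {x : ℝ // 0 ≤ x}) ∈ s}.indicator 1 := by
  funext t
  simp only [finIndicator, Set.indicator, Set.mem_ofPred_eq, Pi.one_apply]

lemma finIndicator_mem_Fspace (s : Finset {x : ℝ // 0 ≤ x}) : finIndicator s ∈ Fspace := by
  rw [finIndicator_eq_indicator]
  refine indicator_const_mem_Fspace ((s.finite_toSet.image Subtype.val).countable.mono ?_) 1
  rintro t ⟨h, ht⟩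
  exact ⟨⟨t, h⟩, ht, rfl⟩

lemma finIndicator_nonneg (s : Finset {x : ℝ // 0 ≤ x}) : 0 ≤ finIndicator s := by
  rw [finIndicator_eq_indicator]
  exact Set.indicator_nonneg (fun _ _ => zero_le_one)

lemma finIndicator_le_one (s : Finset {x : ℝ // 0 ≤ x}) : finIndicator s ≤ 1 := by
  rw [finIndicator_eq_indicator]
  exact Set.indicator_le_self' (fun _ _ => zero_le_one)

lemma finIndicator_of_mem {s : Finset {x : ℝ // 0 ≤ x}} {t : ℝ} (h : 0 ≤ t)
    (ht : (⟨t, h⟩ : {x : ℝ // 0 ≤ x}) ∈ s) : finIndicator s t = 1 :=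
  if_pos ⟨h, ht⟩

lemma finIndicator_of_neg (s : Finset {x : ℝ // 0 ≤ x}) {t : ℝ} (h : t < 0) :
    finIndicator s t = 0 :=
  if_neg fun ⟨h', _⟩ => h.not_ge h'

lemma IsSubnet.exists_ge_finIndicator_eq_one {B : Type} [Preorder B]
    (hdir : ∀ a b : B, ∃ c, a ≤ c ∧ b ≤ c) {φ : B → Finset {x : ℝ // 0 ≤ x}}
    (hφ : IsSubnet φ) {t : ℝ} (ht : 0 ≤ t) (β₀ : B) :
    ∃ β ≥ β₀, finIndicator (φ β) t = 1 := by
  obtain ⟨b, hb⟩ := hφ.2 {⟨t, ht⟩}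
  obtain ⟨β, hβ₀, hbβ⟩ := hdir β₀ b
  exact ⟨β, hβ₀, finIndicator_of_mem ht (hφ.1 hbβ (hb (Finset.mem_singleton_self _)))⟩

lemma IsSubnet.exists_half_le_of_eventually_abs_sub_le {B : Type} [Preorder B]
    (hdir : ∀ a b : B, ∃ c, a ≤ c ∧ b ≤ c) {φ : B → Finset {x : ℝ // 0 ≤ x}}
    (hφ : IsSubnet φ) {l : ℝ → ℝ} (hl : l ∈ Espace) :
    ∃ x, ∀ h : ℝ → ℝ, (∃ β₀, ∀ β ≥ β₀, |finIndicator (φ β) - l| ≤ h) → 1 / 2 ≤ h x := by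
  obtain ⟨c, ⟨x₀, hx₀, hlx₀⟩, x₁, hx₁, hlx₁⟩ := Espace_exists_eq_on_both_half_lines hl
  have htri : 1 ≤ |1 - c| + |c| := by simpa using abs_add_le (1 - c) c
  by_cases hc : 1 / 2 ≤ |1 - c|
  · refine ⟨x₀, fun h ⟨β₀, hβ₀⟩ => ?_⟩
    obtain ⟨β, hβ, hone⟩ := hφ.exists_ge_finIndicator_eq_one hdir hx₀ β₀
    have := hβ₀ β hβ x₀
    simp only [Pi.abs_apply, Pi.sub_apply, hone, hlx₀] at this
    linarith
  · refine ⟨x₁, fun h ⟨β₀, hβ₀⟩ => ?_⟩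
    have := hβ₀ β₀ le_rfl x₁
    simp only [Pi.abs_apply, Pi.sub_apply, finIndicator_of_neg _ hx₁, hlx₁, zero_sub,
      abs_neg] at this
    linarith

lemma exists_apply_lt_of_forall_le_of_Espace {Γ : Type} {g : Γ → ℝ → ℝ} (hg : ∀ γ, 0 ≤ g γ)
    (hinf : ∀ w ∈ Espace, (∀ γ, w ≤ g γ) → w ≤ 0) (x : ℝ) {a : ℝ} (ha : 0 < a) :
    ∃ γ, g γ x < a := by
  by_contra! hle
  set w : ℝ → ℝ := ({x} : Set ℝ).indicator fun _ => a
  have hw : w ∈ Espace :=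
    Fspace_subset_Espace (indicator_const_mem_Fspace (Set.countable_singleton x) a)
  have hwg : ∀ γ, w ≤ g γ := fun γ =>
    Set.indicator_le' (fun y hy => by rw [Set.mem_singleton_iff.1 hy]; exact hle γ)
      (fun y _ => hg γ y)
  have := hinf w hw hwg x
  simp only [w, Set.indicator_of_mem (Set.mem_singleton x), Pi.zero_apply] at this
  linarith

lemma IsSubnet.not_oConvNetIn_Espace_finIndicator {B : Type} [Preorder B]
    (hdir : ∀ a b : B, ∃ c, a ≤ c ∧ b ≤ c) {φ : B → Finset {x : ℝ // 0 ≤ x}}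
    (hφ : IsSubnet φ) : ¬ ∃ l, OConvNetIn Espace (fun β => finIndicator (φ β)) l := by
  rintro ⟨l, hl, Γ, _, -, g, -, -, hg, hinf, hconv⟩
  obtain ⟨x, hx⟩ := hφ.exists_half_le_of_eventually_abs_sub_le hdir hl
  obtain ⟨γ, hγ⟩ := exists_apply_lt_of_forall_le_of_Espace hg hinf x one_half_pos
  exact hγ.not_ge (hx _ (hconv γ))

lemma IsSubnet.not_exists_forall_eventually_abs_finIndicator_sub_le_smul {B : Type} [Preorder B]
    (hdir : ∀ a b : B, ∃ c, a ≤ c ∧ b ≤ c) {φ : B → Finset {x : ℝ // 0 ≤ x}}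
    (hφ : IsSubnet φ) :
    ¬ ∃ l ∈ Espace, ∃ e : ℝ → ℝ, ∀ ε : ℝ, 0 < ε → ∃ β₀, ∀ β ≥ β₀,
      |finIndicator (φ β) - l| ≤ ε • e := by
  rintro ⟨l, hl, e, hconv⟩
  obtain ⟨x, hx⟩ := hφ.exists_half_le_of_eventually_abs_sub_le hdir hl
  obtain ⟨ε, hε, hεe⟩ := exists_pos_mul_lt one_half_pos (e x)
  have := hx _ (hconv ε hε)
  simp only [Pi.smul_apply, smul_eq_mul] at this
  linarith

/-- **Example.** The net `(1_A)_A`, indexed by the finite subsets of `ℝ₊`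
directed by inclusion, is order bounded in `E = ℝ·1 ⊕ F` but no subnet of it
order converges in `E` — nor does any subnet relatively uniformly converge —
so the identity on `(E,|·|,E)` is not (`rp`-)compact. -/
theorem indicator_net_no_order_convergent_subnet :
    (∀ s : Finset {x : ℝ // 0 ≤ x}, finIndicator s ∈ Espace ∧
        0 ≤ finIndicator s ∧ finIndicator s ≤ fun _ => (1:ℝ)) ∧
    (∀ (B : Type) (_ : Preorder B), IsDirectedIx B →
      ∀ φ : B → Finset {x : ℝ // 0 ≤ x}, IsSubnet φ →
        (¬ ∃ l, OConvNetIn Espace (fun β => finIndicator (φ β)) l) ∧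
        ¬ ∃ l ∈ Espace, ∃ e ∈ Espace, 0 ≤ e ∧
            ∀ ε : ℝ, 0 < ε → ∃ β₀, ∀ β ≥ β₀,
              |finIndicator (φ β) - l| ≤ ε • e) := by
  refine ⟨fun s => ⟨Fspace_subset_Espace (finIndicator_mem_Fspace s), finIndicator_nonneg s,
    finIndicator_le_one s⟩, fun B _ hB φ hφ => ⟨hφ.not_oConvNetIn_Espace_finIndicator hB.2, ?_⟩⟩
  rintro ⟨l, hl, e, -, -, hconv⟩
  exact hφ.not_exists_forall_eventually_abs_finIndicator_sub_le_smul hB.2 ⟨l, hl, e, hconv⟩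
end
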